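/- arXiv:2307.05536 — 2 statements merged into one kernel-verified Lean document; each statement's English description precedes it below -/
import Mathlib

section
/- Suppose the collection of ℓ¹-bounded subsets of H is closed under finite unions. Then every set M that is ℓ¹-frame-bounded (i.e., sup_{x∈M} Σ|⟨x,x_n⟩| < ∞ for some frame {x_n}) is ℓ¹-bounded (with respect to some Riesz basis). -/
open scoped ENNReal NNReal

noncomputable def l1Norm {H : Type*} [NormedAddCommGroup H] [InnerProductSpace ℂ H]
    (e : ℕ → H) (x : H) : ℝ≥0∞ :=
  ∑' n, (‖(inner ℂ x (e n) : ℂ)‖₊ : ℝ≥0∞)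

/-- A Riesz basis: image of an orthonormal basis under a topological isomorphism. -/
def IsRieszBasis {H : Type*} [NormedAddCommGroup H] [InnerProductSpace ℂ H]
    (e : ℕ → H) : Prop :=
  ∃ (b : HilbertBasis ℕ ℂ H) (T : H ≃L[ℂ] H), ∀ n, e n = T (b n)

/-- A frame for `H`. -/
def IsFrame {H : Type*} [NormedAddCommGroup H] [InnerProductSpace ℂ H]
    (x : ℕ → H) : Prop :=
  ∃ A B : ℝ≥0, 0 < A ∧ A ≤ B ∧ ∀ y : H,
    (A : ℝ≥0∞) * (‖y‖₊ : ℝ≥0∞) ^ 2 ≤ (∑' n, (‖(inner ℂ y (x n) : ℂ)‖₊ : ℝ≥0∞) ^ 2) ∧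
    (∑' n, (‖(inner ℂ y (x n) : ℂ)‖₊ : ℝ≥0∞) ^ 2) ≤ (B : ℝ≥0∞) * (‖y‖₊ : ℝ≥0∞) ^ 2

/-- `M` is ℓ¹-bounded: finite sup of ℓ¹ norms with respect to some Riesz basis. -/
def L1Bounded {H : Type*} [NormedAddCommGroup H] [InnerProductSpace ℂ H]
    (M : Set H) : Prop :=
  ∃ e : ℕ → H, IsRieszBasis e ∧ ∃ R : ℝ≥0∞, R ≠ ⊤ ∧ ∀ x ∈ M, l1Norm e x ≤ R

/-- The space `H_E` of vectors with absolutely summable coefficients. -/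
def HE {H : Type*} [NormedAddCommGroup H] [InnerProductSpace ℂ H]
    (e : ℕ → H) : Set H :=
  {x : H | l1Norm e x ≠ ⊤}

namespace Stmt17Aux

open ContinuousLinearMap

open scoped lp

variable {H : Type*} [NormedAddCommGroup H] [InnerProductSpace ℂ H] [CompleteSpace H]

local notation "⟪" x ", " y "⟫" => @inner ℂ _ _ x y

lemma nnnorm_inner_symm (x y : H) : ‖⟪x, y⟫‖₊ = ‖⟪y, x⟫‖₊ :=
  NNReal.coe_injective (by simpa using norm_inner_symm (𝕜 := ℂ) x y)

/-- The "inverse adjoint" of a topological automorphism. -/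
noncomputable def dualCLE (T : H ≃L[ℂ] H) : H ≃L[ℂ] H :=
  ContinuousLinearEquiv.equivOfInverse (adjoint (T.symm : H →L[ℂ] H)) (adjoint (T : H →L[ℂ] H))
    (fun x => by
      rw [← ContinuousLinearMap.comp_apply, ← adjoint_comp]
      have : (T.symm : H →L[ℂ] H) ∘L (T : H →L[ℂ] H) = ContinuousLinearMap.id ℂ H := by
        ext y; simp
      rw [this, adjoint_id]; rfl)
    (fun x => by
      rw [← ContinuousLinearMap.comp_apply, ← adjoint_comp]
      have : (T : H →L[ℂ] H) ∘L (T.symm : H →L[ℂ] H) = ContinuousLinearMap.id ℂ H := by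
        ext y; simp
      rw [this, adjoint_id]; rfl)

lemma dualCLE_apply (T : H ≃L[ℂ] H) (x : H) :
    dualCLE T x = adjoint (T.symm : H →L[ℂ] H) x := rfl

lemma dualCLE_biorth (T : H ≃L[ℂ] H) (b : HilbertBasis ℕ ℂ H) (n m : ℕ) :
    ⟪T (b n), dualCLE T (b m)⟫ = if n = m then 1 else 0 := by
  rw [dualCLE_apply, adjoint_inner_right]
  simp only [ContinuousLinearEquiv.coe_coe, ContinuousLinearEquiv.symm_apply_apply]
  exact orthonormal_iff_ite.mp b.orthonormal n m

/-- The range of a Riesz basis is ℓ¹-bounded (with constant 1, w.r.t. the dual basis). -/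
lemma l1Bounded_range_of_rieszBasis (e : ℕ → H) (he : IsRieszBasis e) :
    ∃ d : ℕ → H, IsRieszBasis d ∧ ∀ n, l1Norm d (e n) ≤ 1 := by
  obtain ⟨b, T, hT⟩ := he
  refine ⟨fun m => dualCLE T (b m), ⟨b, dualCLE T, fun _ => rfl⟩, fun n => ?_⟩
  have : ∀ m, (‖⟪e n, dualCLE T (b m)⟫‖₊ : ℝ≥0∞) = if m = n then 1 else 0 := by
    intro m
    rw [hT, dualCLE_biorth]
    by_cases h : n = m <;> simp [h, eq_comm]
  rw [l1Norm]
  calc (∑' m, (‖⟪e n, dualCLE T (b m)⟫‖₊ : ℝ≥0∞))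
      = ∑' m, if m = n then (1:ℝ≥0∞) else 0 := by
        exact tsum_congr this
    _ ≤ 1 := le_of_eq (by simp [tsum_ite_eq])

lemma l1Norm_add_le (e : ℕ → H) (x y : H) :
    l1Norm e (x + y) ≤ l1Norm e x + l1Norm e y := by
  rw [l1Norm, l1Norm, l1Norm, ← ENNReal.tsum_add]
  refine ENNReal.tsum_le_tsum fun n => ?_
  rw [← ENNReal.coe_add, ENNReal.coe_le_coe, inner_add_left]
  exact nnnorm_add_le _ _


section Frame

lemma frame_dual (b₀ : HilbertBasis ℕ ℂ H) (f : ℕ → H) (hf : IsFrame f) :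
    ∃ (g : ℕ → H) (Cg : ℝ≥0) (U : H →L[ℂ] H),
      (∀ n, ‖g n‖₊ ≤ Cg) ∧ (∀ n, U (b₀ n) = g n) ∧
      ∀ x : H, Summable (fun n => ‖(⟪f n, x⟫ : ℂ)‖) →
        Summable (fun n => (⟪f n, x⟫ : ℂ) • g n) ∧ x = ∑' n, (⟪f n, x⟫ : ℂ) • g n := by
  classical
  obtain ⟨A, B, hA, hAB, hfr⟩ := hf
  -- square-summability of frame coefficients
  have hmemNN : ∀ x : H, Summable (fun n => (‖(⟪x, f n⟫ : ℂ)‖₊ ^ 2 : ℝ≥0)) := by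
    intro x
    apply ENNReal.tsum_coe_ne_top_iff_summable.mp
    push_cast [ENNReal.coe_pow]
    exact ne_top_of_le_ne_top (ENNReal.mul_ne_top ENNReal.coe_ne_top (ENNReal.pow_ne_top ENNReal.coe_ne_top)) (hfr x).2
  have hmemR : ∀ x : H, Summable (fun n => ‖(⟪f n, x⟫ : ℂ)‖ ^ 2) := by
    intro x
    have h3 := NNReal.summable_coe.mpr (hmemNN x)
    convert h3 using 2 with n
    push_cast
    rw [norm_inner_symm]
  have hmem : ∀ x : H, Memℓp (fun n => (⟪f n, x⟫ : ℂ)) 2 := by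
    intro x
    apply memℓp_gen
    convert hmemR x using 2 with n
    rw [ENNReal.toReal_ofNat, Real.rpow_two]
  -- the analysis operator
  let Vl : H →ₗ[ℂ] ℓ²(ℕ, ℂ) :=
    { toFun := fun x => ⟨fun n => ⟪f n, x⟫, hmem x⟩
      map_add' := fun x y => by ext n; exact inner_add_right _ _ _
      map_smul' := fun c x => by ext n; exact inner_smul_right _ _ _ }
  have hVl_apply : ∀ (x : H) (n : ℕ), (Vl x) n = ⟪f n, x⟫ := fun x n => rfl
  have hVsqR : ∀ x : H, ‖Vl x‖ ^ 2 = ∑' n, ‖(⟪f n, x⟫ : ℂ)‖ ^ 2 := by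
    intro x
    have := lp.norm_rpow_eq_tsum (p := 2) (by norm_num) (Vl x)
    rw [ENNReal.toReal_ofNat] at this
    simpa [Real.rpow_two, hVl_apply] using this
  have hVsq : ∀ x : H, ((‖Vl x‖₊ : ℝ≥0∞)) ^ 2 = ∑' n, ((‖(⟪x, f n⟫ : ℂ)‖₊ : ℝ≥0∞)) ^ 2 := by
    intro x
    rw [← (ofReal_norm (Vl x)).trans (enorm_eq_nnnorm _), ← ENNReal.ofReal_pow (norm_nonneg _), hVsqR x,
      ENNReal.ofReal_tsum_of_nonneg (fun n => by positivity) (hmemR x)]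
    refine tsum_congr fun n => ?_
    rw [norm_inner_symm, ENNReal.ofReal_pow (norm_nonneg _), (ofReal_norm _).trans (enorm_eq_nnnorm _)]
  -- NNReal bounds
  have hVleNN : ∀ x : H, ‖Vl x‖₊ ≤ NNReal.sqrt B * ‖x‖₊ := by
    intro x
    have h := (hVsq x).le.trans (hfr x).2
    rw [show ((B : ℝ≥0∞) * (‖x‖₊ : ℝ≥0∞) ^ 2) = ((B * ‖x‖₊ ^ 2 : ℝ≥0) : ℝ≥0∞) by push_cast; ring,
      show (((‖Vl x‖₊ : ℝ≥0∞)) ^ 2) = ((‖Vl x‖₊ ^ 2 : ℝ≥0) : ℝ≥0∞) by push_cast; ring,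
      ENNReal.coe_le_coe] at h
    calc ‖Vl x‖₊ = NNReal.sqrt (‖Vl x‖₊ ^ 2) := (NNReal.sqrt_sq _).symm
      _ ≤ NNReal.sqrt (B * ‖x‖₊ ^ 2) := NNReal.sqrt_le_sqrt.mpr h
      _ = NNReal.sqrt B * ‖x‖₊ := by rw [NNReal.sqrt_mul, NNReal.sqrt_sq]
  have hVgeNN : ∀ x : H, NNReal.sqrt A * ‖x‖₊ ≤ ‖Vl x‖₊ := by
    intro x
    have h := le_trans (hfr x).1 (hVsq x).ge
    rw [show ((A : ℝ≥0∞) * (‖x‖₊ : ℝ≥0∞) ^ 2) = ((A * ‖x‖₊ ^ 2 : ℝ≥0) : ℝ≥0∞) by push_cast; ring,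
      show (((‖Vl x‖₊ : ℝ≥0∞)) ^ 2) = ((‖Vl x‖₊ ^ 2 : ℝ≥0) : ℝ≥0∞) by push_cast; ring,
      ENNReal.coe_le_coe] at h
    calc NNReal.sqrt A * ‖x‖₊ = NNReal.sqrt (A * ‖x‖₊ ^ 2) := by
          rw [NNReal.sqrt_mul, NNReal.sqrt_sq]
      _ ≤ NNReal.sqrt (‖Vl x‖₊ ^ 2) := NNReal.sqrt_le_sqrt.mpr h
      _ = ‖Vl x‖₊ := NNReal.sqrt_sq _
  let V : H →L[ℂ] ℓ²(ℕ, ℂ) :=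
    Vl.mkContinuous (NNReal.sqrt B) fun x => by
      have := hVleNN x
      calc ‖Vl x‖ = ((‖Vl x‖₊ : ℝ)) := rfl
        _ ≤ ((NNReal.sqrt B * ‖x‖₊ : ℝ≥0) : ℝ) := NNReal.coe_le_coe.mpr this
        _ = (NNReal.sqrt B : ℝ) * ‖x‖ := by push_cast; rfl
  have hV_apply : ∀ (x : H) (n : ℕ), (V x) n = ⟪f n, x⟫ := fun x n => rfl
  have hV_eq : ∀ x : H, V x = Vl x := fun x => rfl
  -- the frame operator
  set S : H →L[ℂ] H := adjoint V ∘L V with hS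
  have hS_apply : ∀ x : H, S x = adjoint V (V x) := fun x => rfl
  have hSinner : ∀ x y : H, ⟪y, S x⟫ = (inner ℂ (V y) (V x) : ℂ) := by
    intro x y; rw [hS_apply, adjoint_inner_right]
  have hSinner' : ∀ x y : H, ⟪S x, y⟫ = (inner ℂ (V x) (V y) : ℂ) := by
    intro x y; rw [hS_apply, adjoint_inner_left]
  -- injectivity
  have hVzero : ∀ x : H, V x = 0 → x = 0 := by
    intro x hx
    have h := hVgeNN x
    have hVlx : Vl x = 0 := hx
    rw [hVlx, nnnorm_zero, le_zero_iff, mul_eq_zero] at h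
    have hA' : NNReal.sqrt A ≠ 0 := by
      simp only [ne_eq, NNReal.sqrt_eq_zero]
      exact hA.ne'
    rcases h with h | h
    · exact absurd h hA'
    · simpa using h
  have hker : LinearMap.ker (S : H →ₗ[ℂ] H) = ⊥ := by
    rw [LinearMap.ker_eq_bot']
    intro x hx
    apply hVzero
    have h : (inner ℂ (V x) (V x) : ℂ) = 0 := by rw [← hSinner x x, show S x = 0 from hx, inner_zero_right]
    exact inner_self_eq_zero.mp h
  -- antilipschitz
  have hanti : AntilipschitzWith (A⁻¹) S := by
    apply S.antilipschitz_of_bound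
    intro x
    by_cases hx : x = 0
    · simp [hx]
    have hxpos : (0:ℝ) < ‖x‖ := norm_pos_iff.mpr hx
    have h1 : (A : ℝ) * ‖x‖ ^ 2 ≤ ‖V x‖ ^ 2 := by
      have := hVgeNN x
      have h2 : (NNReal.sqrt A * ‖x‖₊) ^ 2 ≤ ‖Vl x‖₊ ^ 2 := pow_le_pow_left' this 2
      rw [mul_pow, NNReal.sq_sqrt] at h2
      calc (A : ℝ) * ‖x‖ ^ 2 = ((A * ‖x‖₊ ^ 2 : ℝ≥0) : ℝ) := by push_cast; rfl
        _ ≤ ((‖Vl x‖₊ ^ 2 : ℝ≥0) : ℝ) := NNReal.coe_le_coe.mpr h2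
        _ = ‖V x‖ ^ 2 := by push_cast; rfl
    have h2 : ‖V x‖ ^ 2 = RCLike.re (inner ℂ x (S x) : ℂ) := by
      rw [hSinner x x, ← @norm_sq_eq_re_inner ℂ]
    have h3 : RCLike.re (inner ℂ x (S x) : ℂ) ≤ ‖x‖ * ‖S x‖ :=
      le_trans (RCLike.re_le_norm _) (norm_inner_le_norm _ _)
    have h4 : (A : ℝ) * ‖x‖ * ‖x‖ ≤ ‖x‖ * ‖S x‖ := by nlinarith
    have h5 : (A : ℝ) * ‖x‖ ≤ ‖S x‖ := by
      have := (mul_le_mul_iff_of_pos_right hxpos).mp (by linarith [h4] : (A : ℝ) * ‖x‖ * ‖x‖ ≤ ‖S x‖ * ‖x‖)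
      linarith
    calc ‖x‖ = (A : ℝ)⁻¹ * ((A : ℝ) * ‖x‖) := by
          field_simp
      _ ≤ (A : ℝ)⁻¹ * ‖S x‖ := by
          apply mul_le_mul_of_nonneg_left h5 (by positivity)
      _ = ((A⁻¹ : ℝ≥0) : ℝ) * ‖S x‖ := by push_cast; ring
  -- surjectivity
  have hrange : LinearMap.range (S : H →ₗ[ℂ] H) = ⊤ := by
    have hcl : IsClosed ((LinearMap.range (S : H →ₗ[ℂ] H) : Submodule ℂ H) : Set H) := by
      rw [LinearMap.coe_range]
      exact hanti.isClosed_range S.uniformContinuous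
    haveI : CompleteSpace (LinearMap.range (S : H →ₗ[ℂ] H) : Submodule ℂ H) := hcl.completeSpace_coe
    rw [← Submodule.orthogonal_eq_bot_iff]
    rw [Submodule.eq_bot_iff]
    intro y hy
    have h0 : (inner ℂ (S y) y : ℂ) = 0 :=
      (Submodule.mem_orthogonal _ y).mp hy (S y) (LinearMap.mem_range_self _ y)
    rw [hSinner' y y] at h0
    exact hVzero y (inner_self_eq_zero.mp h0)
  -- the inverse of the frame operator
  let Se : H ≃L[ℂ] H := ContinuousLinearEquiv.ofBijective S hker hrange
  have hSe_apply : ∀ x : H, Se x = S x := fun x => rfl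
  let g : ℕ → H := fun n => Se.symm (f n)
  -- norm bound for f and g
  have hfB : ∀ n, ‖f n‖₊ ≤ NNReal.sqrt B := by
    intro n
    have h1 : ((‖(⟪f n, f n⟫ : ℂ)‖₊ : ℝ≥0∞)) ^ 2 ≤ (B : ℝ≥0∞) * (‖f n‖₊ : ℝ≥0∞) ^ 2 :=
      le_trans (ENNReal.le_tsum n) (hfr (f n)).2
    have h2 : ‖(⟪f n, f n⟫ : ℂ)‖₊ = ‖f n‖₊ ^ 2 := by
      rw [inner_self_eq_norm_sq_to_K]
      simp [nnnorm_pow]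
    rw [h2] at h1
    rw [show (((‖f n‖₊ ^ 2 : ℝ≥0) : ℝ≥0∞)) ^ 2 = (((‖f n‖₊ ^ 2) ^ 2 : ℝ≥0) : ℝ≥0∞) by push_cast; ring,
      show ((B : ℝ≥0∞) * (‖f n‖₊ : ℝ≥0∞) ^ 2) = ((B * ‖f n‖₊ ^ 2 : ℝ≥0) : ℝ≥0∞) by push_cast; ring,
      ENNReal.coe_le_coe] at h1
    rw [NNReal.le_sqrt_iff_sq_le]
    by_cases hz : ‖f n‖₊ ^ 2 = 0
    · rw [hz]; exact bot_le
    · have hpos : 0 < ‖f n‖₊ ^ 2 := zero_lt_iff.mpr hz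
      have h3 : ‖f n‖₊ ^ 2 * ‖f n‖₊ ^ 2 ≤ B * ‖f n‖₊ ^ 2 := by
        calc ‖f n‖₊ ^ 2 * ‖f n‖₊ ^ 2 = (‖f n‖₊ ^ 2) ^ 2 := (sq _).symm
          _ ≤ B * ‖f n‖₊ ^ 2 := h1
      exact (mul_le_mul_iff_of_pos_right hpos).mp h3
  set Cg : ℝ≥0 := ‖(Se.symm : H →L[ℂ] H)‖₊ * NNReal.sqrt B with hCg
  have hg : ∀ n, ‖g n‖₊ ≤ Cg := by
    intro n
    calc ‖g n‖₊ = ‖(Se.symm : H →L[ℂ] H) (f n)‖₊ := rfl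
      _ ≤ ‖(Se.symm : H →L[ℂ] H)‖₊ * ‖f n‖₊ := ContinuousLinearMap.le_opNNNorm _ _
      _ ≤ Cg := mul_le_mul_right (hfB n) _
  -- the map U
  have hVadj_single : ∀ n, adjoint V (lp.single 2 n 1) = f n := by
    intro n
    apply ext_inner_left ℂ
    intro y
    rw [adjoint_inner_right, lp.inner_single_right]
    have h1 : (V y) n = ⟪f n, y⟫ := rfl
    rw [h1, RCLike.inner_apply, inner_conj_symm, one_mul]
  let U : H →L[ℂ] H :=
    ((Se.symm : H →L[ℂ] H) ∘L adjoint V) ∘L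
      (b₀.repr.toContinuousLinearEquiv : H →L[ℂ] ℓ²(ℕ, ℂ))
  have hU : ∀ n, U (b₀ n) = g n := by
    intro n
    have h1 : U (b₀ n) = Se.symm (adjoint V (b₀.repr (b₀ n))) := rfl
    rw [h1, b₀.repr_self, hVadj_single]
  -- reconstruction
  refine ⟨g, Cg, U, hg, hU, ?_⟩
  intro x hx
  have hsum_f : Summable (fun n => (⟪f n, x⟫ : ℂ) • f n) := by
    apply Summable.of_norm
    refine Summable.of_nonneg_of_le (fun n => norm_nonneg _) (fun n => ?_)
      (hx.mul_left (NNReal.sqrt B : ℝ))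
    rw [norm_smul, mul_comm]
    exact mul_le_mul_of_nonneg_right (NNReal.coe_le_coe.mpr (hfB n)) (norm_nonneg _)
  have hsum_g : Summable (fun n => (⟪f n, x⟫ : ℂ) • g n) := by
    apply Summable.of_norm
    refine Summable.of_nonneg_of_le (fun n => norm_nonneg _) (fun n => ?_)
      (hx.mul_left (Cg : ℝ))
    rw [norm_smul, mul_comm]
    exact mul_le_mul_of_nonneg_right (NNReal.coe_le_coe.mpr (hg n)) (norm_nonneg _)
  refine ⟨hsum_g, ?_⟩
  have hSx : S x = ∑' n, (⟪f n, x⟫ : ℂ) • f n := by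
    apply ext_inner_left ℂ
    intro y
    rw [hSinner x y, lp.inner_eq_tsum]
    calc ∑' i, (inner ℂ ((V y) i) ((V x) i) : ℂ)
        = ∑' n, ((innerSL ℂ) y) ((⟪f n, x⟫ : ℂ) • f n) := by
          refine tsum_congr fun n => ?_
          have h1 : (V y) n = ⟪f n, y⟫ := rfl
          have h2 : (V x) n = ⟪f n, x⟫ := rfl
          rw [RCLike.inner_apply, h1, h2, inner_conj_symm, innerSL_apply_apply, inner_smul_right]
      _ = ((innerSL ℂ) y) (∑' n, (⟪f n, x⟫ : ℂ) • f n) := ((innerSL ℂ y).map_tsum hsum_f).symm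
      _ = inner ℂ y (∑' n, (⟪f n, x⟫ : ℂ) • f n) := innerSL_apply_apply _ _ _
  have hrec : x = ∑' n, (⟪f n, x⟫ : ℂ) • g n := by
    have h1 : x = Se.symm (S x) := by
      rw [← hSe_apply, ContinuousLinearEquiv.symm_apply_apply]
    conv_lhs => rw [h1, hSx]
    have h2 := (Se.symm : H →L[ℂ] H).map_tsum hsum_f
    calc Se.symm (∑' n, (⟪f n, x⟫ : ℂ) • f n)
        = ∑' n, (Se.symm : H →L[ℂ] H) ((⟪f n, x⟫ : ℂ) • f n) := h2
      _ = ∑' n, (⟪f n, x⟫ : ℂ) • g n := by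
          refine tsum_congr fun n => ?_
          rw [map_smul]
          rfl
  exact hrec

end Frame

lemma exists_shift_equiv (U : H →L[ℂ] H) :
    ∃ (c : ℂ) (E₁ E₂ : H ≃L[ℂ] H),
      (∀ x, E₁ x = U x + c • x) ∧ (∀ x, E₂ x = -(c • x)) := by
  set lr : ℝ := ‖U‖ + 1 with hlr
  have hlrpos : 0 < lr := by positivity
  set c : ℂ := (lr : ℂ) with hc
  have hc0 : c ≠ 0 := by
    simp only [hc, ne_eq, Complex.ofReal_eq_zero]
    exact hlrpos.ne'
  have hsmall : ‖-(c⁻¹ • U)‖ < 1 := by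
    rw [norm_neg, norm_smul, norm_inv]
    have : ‖c‖ = lr := by rw [hc, Complex.norm_real, Real.norm_of_nonneg hlrpos.le]
    rw [this, hlr]
    rw [inv_mul_lt_iff₀ (by positivity)]
    linarith [norm_nonneg U]
  let u1 : (H →L[ℂ] H)ˣ := Units.oneSub (-(c⁻¹ • U)) hsmall
  have hu1 : (u1 : H →L[ℂ] H) = 1 + c⁻¹ • U := by
    show 1 - -(c⁻¹ • U) = 1 + c⁻¹ • U
    rw [sub_neg_eq_add]
  have hmul : ∀ (a b : ℂ), (a • (1 : H →L[ℂ] H)) * (b • (1 : H →L[ℂ] H)) = (a * b) • 1 := by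
    intro a b
    rw [smul_mul_smul_comm, one_mul]
  let u2 : (H →L[ℂ] H)ˣ :=
    ⟨c • 1, c⁻¹ • 1, by rw [hmul, mul_inv_cancel₀ hc0, one_smul],
      by rw [hmul, inv_mul_cancel₀ hc0, one_smul]⟩
  let E₁ : H ≃L[ℂ] H := ContinuousLinearEquiv.ofUnit (u2 * u1)
  have hE₁ : ∀ x, E₁ x = U x + c • x := by
    intro x
    have hval : ((u2 * u1 : (H →L[ℂ] H)ˣ) : H →L[ℂ] H) = c • 1 + U := by
      show (c • (1 : H →L[ℂ] H)) * (u1 : H →L[ℂ] H) = c • 1 + U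
      rw [hu1, mul_add, mul_one, smul_mul_assoc, one_mul, smul_smul,
        mul_inv_cancel₀ hc0, one_smul]
    show ((u2 * u1 : (H →L[ℂ] H)ˣ) : H →L[ℂ] H) x = U x + c • x
    rw [hval]
    simp [add_comm]
  let u3 : (H →L[ℂ] H)ˣ :=
    ⟨(-c) • 1, (-c)⁻¹ • 1, by rw [hmul, mul_inv_cancel₀ (neg_ne_zero.mpr hc0), one_smul],
      by rw [hmul, inv_mul_cancel₀ (neg_ne_zero.mpr hc0), one_smul]⟩
  let E₂ : H ≃L[ℂ] H := ContinuousLinearEquiv.ofUnit u3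
  have hE₂ : ∀ x, E₂ x = -(c • x) := by
    intro x
    show ((-c) • (1 : H →L[ℂ] H)) x = -(c • x)
    simp
  exact ⟨c, E₁, E₂, hE₁, hE₂⟩

end Stmt17Aux

theorem stmt17 {H : Type*} [NormedAddCommGroup H] [InnerProductSpace ℂ H] [CompleteSpace H] (b₀ : HilbertBasis ℕ ℂ H)
    (hyp : ∀ M N : Set H, L1Bounded M → L1Bounded N → L1Bounded (M ∪ N))
    (M : Set H)
    (hM : ∃ f : ℕ → H, IsFrame f ∧ ∃ R : ℝ≥0∞, R ≠ ⊤ ∧ ∀ x ∈ M, l1Norm f x ≤ R) :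
    L1Bounded M := by
  classical
  obtain ⟨f, hf, R, hR, hRM⟩ := hM
  obtain ⟨g, Cg, U, hg, hU, hrec⟩ := Stmt17Aux.frame_dual b₀ f hf
  obtain ⟨c, E₁, E₂, hE₁, hE₂⟩ := Stmt17Aux.exists_shift_equiv U
  set hseq : ℕ → H := fun n => E₁ (b₀ n) with hhseq
  set kseq : ℕ → H := fun n => E₂ (b₀ n) with hkseq
  have hgsum : ∀ n, g n = hseq n + kseq n := by
    intro n
    rw [hhseq, hkseq]
    simp only [hE₁, hE₂, hU]
    abel
  have hP : L1Bounded (Set.range hseq) := by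
    obtain ⟨d, hd, hdb⟩ := Stmt17Aux.l1Bounded_range_of_rieszBasis hseq ⟨b₀, E₁, fun _ => rfl⟩
    exact ⟨d, hd, 1, ENNReal.one_ne_top, by rintro x ⟨n, rfl⟩; exact hdb n⟩
  have hQ : L1Bounded (Set.range kseq) := by
    obtain ⟨d, hd, hdb⟩ := Stmt17Aux.l1Bounded_range_of_rieszBasis kseq ⟨b₀, E₂, fun _ => rfl⟩
    exact ⟨d, hd, 1, ENNReal.one_ne_top, by rintro x ⟨n, rfl⟩; exact hdb n⟩
  obtain ⟨e, he, R', hR', hbound⟩ := hyp _ _ hP hQ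
  have hge : ∀ n, l1Norm e (g n) ≤ 2 * R' := by
    intro n
    rw [hgsum n]
    calc l1Norm e (hseq n + kseq n) ≤ l1Norm e (hseq n) + l1Norm e (kseq n) :=
          Stmt17Aux.l1Norm_add_le e _ _
      _ ≤ R' + R' := add_le_add (hbound _ (Or.inl ⟨n, rfl⟩)) (hbound _ (Or.inr ⟨n, rfl⟩))
      _ = 2 * R' := (two_mul R').symm
  refine ⟨e, he, 2 * R' * R, ENNReal.mul_ne_top (ENNReal.mul_ne_top (by simp) hR') hR, ?_⟩
  intro x hx
  have hxR : l1Norm f x ≤ R := hRM x hx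
  have hxsumNN : Summable (fun n => ‖(inner ℂ x (f n) : ℂ)‖₊) := by
    apply ENNReal.tsum_coe_ne_top_iff_summable.mp
    exact ne_top_of_le_ne_top hR hxR
  have hxsum : Summable (fun n => ‖(inner ℂ (f n) x : ℂ)‖) := by
    have h := NNReal.summable_coe.mpr hxsumNN
    convert h using 2 with n
    rw [coe_nnnorm, norm_inner_symm]
  obtain ⟨hsum_g, hxeq⟩ := hrec x hxsum
  have key : ∀ m, (‖(inner ℂ x (e m) : ℂ)‖₊ : ℝ≥0∞) ≤
      ∑' n, (‖(inner ℂ (f n) x : ℂ)‖₊ : ℝ≥0∞) * (‖(inner ℂ (e m) (g n) : ℂ)‖₊ : ℝ≥0∞) := by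
    intro m
    have h1 : (inner ℂ (e m) x : ℂ) = ∑' n, (inner ℂ (f n) x : ℂ) * (inner ℂ (e m) (g n) : ℂ) := by
      conv_lhs => rw [hxeq]
      calc (inner ℂ (e m) (∑' n, (inner ℂ (f n) x : ℂ) • g n) : ℂ)
          = (innerSL ℂ (e m)) (∑' n, (inner ℂ (f n) x : ℂ) • g n) := (innerSL_apply_apply _ _ _).symm
        _ = ∑' n, (innerSL ℂ (e m)) ((inner ℂ (f n) x : ℂ) • g n) :=
            (innerSL ℂ (e m)).map_tsum hsum_g
        _ = ∑' n, (inner ℂ (f n) x : ℂ) * (inner ℂ (e m) (g n) : ℂ) := by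
            refine tsum_congr fun n => ?_
            rw [innerSL_apply_apply, inner_smul_right]
    have hsm : Summable (fun n => ‖(inner ℂ (f n) x : ℂ) * (inner ℂ (e m) (g n) : ℂ)‖₊) := by
      apply NNReal.summable_coe.mp
      have hb : ∀ n, ((‖(inner ℂ (f n) x : ℂ) * (inner ℂ (e m) (g n) : ℂ)‖₊ : ℝ)) ≤
          ‖(inner ℂ (f n) x : ℂ)‖ * (‖e m‖ * (Cg : ℝ)) := by
        intro n
        rw [coe_nnnorm, norm_mul]
        apply mul_le_mul_of_nonneg_left _ (norm_nonneg _)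
        calc ‖(inner ℂ (e m) (g n) : ℂ)‖ ≤ ‖e m‖ * ‖g n‖ := norm_inner_le_norm _ _
          _ ≤ ‖e m‖ * (Cg : ℝ) :=
            mul_le_mul_of_nonneg_left (NNReal.coe_le_coe.mpr (hg n)) (norm_nonneg _)
      exact Summable.of_nonneg_of_le (fun n => NNReal.coe_nonneg _) hb
        (hxsum.mul_right _)
    rw [Stmt17Aux.nnnorm_inner_symm, h1]
    calc (‖∑' n, (inner ℂ (f n) x : ℂ) * (inner ℂ (e m) (g n) : ℂ)‖₊ : ℝ≥0∞)
        ≤ ((∑' n, ‖(inner ℂ (f n) x : ℂ) * (inner ℂ (e m) (g n) : ℂ)‖₊ : ℝ≥0) : ℝ≥0∞) :=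
          ENNReal.coe_le_coe.mpr (nnnorm_tsum_le hsm)
      _ = ∑' n, ((‖(inner ℂ (f n) x : ℂ) * (inner ℂ (e m) (g n) : ℂ)‖₊ : ℝ≥0) : ℝ≥0∞) :=
          ENNReal.coe_tsum hsm
      _ = ∑' n, (‖(inner ℂ (f n) x : ℂ)‖₊ : ℝ≥0∞) * (‖(inner ℂ (e m) (g n) : ℂ)‖₊ : ℝ≥0∞) := by
          refine tsum_congr fun n => ?_
          rw [nnnorm_mul, ENNReal.coe_mul]
  calc l1Norm e x
      = ∑' m, (‖(inner ℂ x (e m) : ℂ)‖₊ : ℝ≥0∞) := rfl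
    _ ≤ ∑' m, ∑' n, (‖(inner ℂ (f n) x : ℂ)‖₊ : ℝ≥0∞) * (‖(inner ℂ (e m) (g n) : ℂ)‖₊ : ℝ≥0∞) :=
        ENNReal.tsum_le_tsum key
    _ = ∑' n, ∑' m, (‖(inner ℂ (f n) x : ℂ)‖₊ : ℝ≥0∞) * (‖(inner ℂ (e m) (g n) : ℂ)‖₊ : ℝ≥0∞) :=
        ENNReal.tsum_comm
    _ = ∑' n, (‖(inner ℂ (f n) x : ℂ)‖₊ : ℝ≥0∞) * l1Norm e (g n) := by
        refine tsum_congr fun n => ?_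
        rw [ENNReal.tsum_mul_left]
        congr 1
        refine tsum_congr fun m => ?_
        rw [Stmt17Aux.nnnorm_inner_symm]
    _ ≤ ∑' n, (‖(inner ℂ (f n) x : ℂ)‖₊ : ℝ≥0∞) * (2 * R') :=
        ENNReal.tsum_le_tsum fun n => mul_le_mul_right (hge n) _
    _ = (∑' n, (‖(inner ℂ (f n) x : ℂ)‖₊ : ℝ≥0∞)) * (2 * R') := ENNReal.tsum_mul_right
    _ = l1Norm f x * (2 * R') := by
        congr 1
        refine tsum_congr fun n => ?_
        rw [Stmt17Aux.nnnorm_inner_symm]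
    _ ≤ R * (2 * R') := mul_le_mul_left hxR _
    _ = 2 * R' * R := by ring
end

section
/- Suppose H embeds isometrically into a separable Hilbert space K, M ⊆ H is ℓ¹-bounded in K with respect to a Riesz basis of K, and the orthogonal complement of the closed span of M within H is infinite-dimensional. Then M is ℓ¹-bounded in H. -/
open scoped ENNReal NNReal

lemma orthonormal_countable {E ι : Type*} [NormedAddCommGroup E] [InnerProductSpace ℂ E]
    [TopologicalSpace.SeparableSpace E] {v : ι → E} (hv : Orthonormal ℂ v) : Countable ι := by
  have hd : ∀ i j, i ≠ j → (1 : ℝ) ≤ dist (v i) (v j) := by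
    intro i j hij
    have h2 : ‖v i - v j‖ ^ 2 = 2 := by
      rw [@norm_sub_sq ℂ, hv.2 hij]
      simp [hv.1 i, hv.1 j]; norm_num
    rw [dist_eq_norm]
    nlinarith [norm_nonneg (v i - v j)]
  refine Pairwise.countable_of_isOpen_disjoint (s := fun i => Metric.ball (v i) (1/2))
    ?_ (fun i => Metric.isOpen_ball) (fun i => Metric.nonempty_ball.2 (by norm_num))
  intro i j hij
  apply Metric.ball_disjoint_ball
  calc (1:ℝ)/2 + 1/2 = 1 := by norm_num
  _ ≤ dist (v i) (v j) := hd i j hij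

lemma separable_of_hilbertBasis {E : Type*} [NormedAddCommGroup E] [InnerProductSpace ℂ E]
    (b : HilbertBasis ℕ ℂ E) : TopologicalSpace.SeparableSpace E := by
  have hd : Dense (Submodule.span ℂ (Set.range b) : Set E) := by
    rw [dense_iff_closure_eq, ← Submodule.topologicalClosure_coe, b.dense_span]
    rfl
  exact hd.isSeparable_iff.mp ((Set.countable_range b).isSeparable.span)

lemma exists_hilbertBasis_nat (E : Type*) [NormedAddCommGroup E] [InnerProductSpace ℂ E]
    [TopologicalSpace.SeparableSpace E] [CompleteSpace E] (hfd : ¬ FiniteDimensional ℂ E) :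
    Nonempty (HilbertBasis ℕ ℂ E) := by
  obtain ⟨w, b, hb⟩ := exists_hilbertBasis ℂ E
  have hw : Orthonormal ℂ ((↑) : w → E) := hb ▸ b.orthonormal
  have hcount : Countable w := orthonormal_countable hw
  have hspan : (Submodule.span ℂ w).topologicalClosure = ⊤ := by
    have := b.dense_span
    rwa [hb, Subtype.range_coe] at this
  have hinf : Infinite w := by
    rw [Set.infinite_coe_iff]
    intro hfin
    apply hfd
    haveI : FiniteDimensional ℂ (Submodule.span ℂ w) := FiniteDimensional.span_of_finite ℂ hfin
    have hcl : (Submodule.span ℂ w).topologicalClosure = Submodule.span ℂ w :=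
      SetLike.ext' (Submodule.closed_of_finiteDimensional _).closure_eq
    rw [hcl] at hspan
    rw [hspan] at this
    exact Submodule.topEquiv.finiteDimensional
  obtain ⟨d⟩ := nonempty_denumerable w
  letI := d
  let eqv : w ≃ ℕ := Denumerable.eqv w
  have hon : Orthonormal ℂ (fun n => ((eqv.symm n : w) : E)) :=
    hw.comp eqv.symm eqv.symm.injective
  refine ⟨HilbertBasis.mk hon ?_⟩
  have hrange : Set.range (fun n => ((eqv.symm n : w) : E)) = w := by
    have h1 : (Set.range fun n => ((eqv.symm n : w) : E)) = Set.range ((↑) : w → E) :=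
      eqv.symm.surjective.range_comp _
    rw [h1, Subtype.range_coe]
  rw [hrange, hspan]

noncomputable def cleAdjoint {E F : Type*} [NormedAddCommGroup E] [InnerProductSpace ℂ E]
    [CompleteSpace E] [NormedAddCommGroup F] [InnerProductSpace ℂ F] [CompleteSpace F]
    (U : E ≃L[ℂ] F) : F ≃L[ℂ] E :=
  ContinuousLinearEquiv.equivOfInverse (ContinuousLinearMap.adjoint (U : E →L[ℂ] F))
    (ContinuousLinearMap.adjoint (U.symm : F →L[ℂ] E))
    (fun x => by
      have h : (ContinuousLinearMap.adjoint (U.symm : F →L[ℂ] E)).comp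
          (ContinuousLinearMap.adjoint (U : E →L[ℂ] F)) = ContinuousLinearMap.id ℂ F := by
        rw [← ContinuousLinearMap.adjoint_comp]
        have h2 : (U : E →L[ℂ] F).comp (U.symm : F →L[ℂ] E) = ContinuousLinearMap.id ℂ F := by
          ext y; simp
        rw [h2, ContinuousLinearMap.adjoint_id]
      exact ContinuousLinearMap.ext_iff.mp h x)
    (fun y => by
      have h : (ContinuousLinearMap.adjoint (U : E →L[ℂ] F)).comp
          (ContinuousLinearMap.adjoint (U.symm : F →L[ℂ] E)) = ContinuousLinearMap.id ℂ E := by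
        rw [← ContinuousLinearMap.adjoint_comp]
        have h2 : (U.symm : F →L[ℂ] E).comp (U : E →L[ℂ] F) = ContinuousLinearMap.id ℂ E := by
          ext x; simp
        rw [h2, ContinuousLinearMap.adjoint_id]
      exact ContinuousLinearMap.ext_iff.mp h y)

lemma cleAdjoint_apply {E F : Type*} [NormedAddCommGroup E] [InnerProductSpace ℂ E]
    [CompleteSpace E] [NormedAddCommGroup F] [InnerProductSpace ℂ F] [CompleteSpace F]
    (U : E ≃L[ℂ] F) (y : F) :
    cleAdjoint U y = ContinuousLinearMap.adjoint (U : E →L[ℂ] F) y := rfl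

theorem stmt18 {H K : Type*} [NormedAddCommGroup H] [InnerProductSpace ℂ H] [CompleteSpace H]
    [NormedAddCommGroup K] [InnerProductSpace ℂ K] [CompleteSpace K]
    (J : H →ₗᵢ[ℂ] K) (M : Set H)
    (hMK : L1Bounded (J '' M))
    (hperp : ¬ FiniteDimensional ℂ ((Submodule.span ℂ M).topologicalClosure)ᗮ) :
    L1Bounded M := by
  classical
  obtain ⟨e, ⟨b, T, hT⟩, R, hR, hRb⟩ := hMK
  haveI : TopologicalSpace.SeparableSpace K := separable_of_hilbertBasis b
  haveI : SecondCountableTopology K := UniformSpace.secondCountable_of_separable K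
  haveI : SecondCountableTopology H := J.isometry.isEmbedding.secondCountableTopology
  set S : Submodule ℂ H := (Submodule.span ℂ M).topologicalClosure with hS
  have hSclosed : IsClosed (S : Set H) := by
    rw [hS]; exact Submodule.isClosed_topologicalClosure _
  haveI : CompleteSpace S := hSclosed.completeSpace_coe
  -- the operator A = T* ∘ J
  let Tadj : K ≃L[ℂ] K := cleAdjoint T
  let A : H →L[ℂ] K := (Tadj : K →L[ℂ] K).comp J.toContinuousLinearMap
  have hAinner : ∀ (x : H) (n : ℕ), (inner ℂ (A x) (b n) : ℂ) = inner ℂ (J x) (e n) := by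
    intro x n
    have h1 : A x = ContinuousLinearMap.adjoint (T : K →L[ℂ] K) (J x) := rfl
    rw [h1, ContinuousLinearMap.adjoint_inner_left, hT n]
    simp
  have hAanti : AntilipschitzWith (1 * ‖(Tadj.symm : K →L[ℂ] K)‖₊) ⇑A :=
    Tadj.antilipschitz.comp J.antilipschitz
  have hAinj : Function.Injective ⇑A := hAanti.injective
  -- the image W₀ = A(S)
  let W₀ : Submodule ℂ K := S.map (A : H →ₗ[ℂ] K)
  have hW₀coe : (W₀ : Set K) = Set.range (fun s : S => A s) := by
    ext y
    constructor
    · rintro ⟨x, hx, rfl⟩; exact ⟨⟨x, hx⟩, rfl⟩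
    · rintro ⟨⟨x, hx⟩, rfl⟩; exact ⟨x, hx, rfl⟩
  have hW₀closed : IsClosed (W₀ : Set K) := by
    rw [hW₀coe]
    exact (hAanti.comp isometry_subtype_coe.antilipschitz).isClosed_range
      (A.uniformContinuous.comp uniformContinuous_subtype_val)
  haveI : CompleteSpace W₀ := hW₀closed.completeSpace_coe
  -- the isomorphism S ≃ W₀
  let f₀ : S →L[ℂ] W₀ := (A.comp S.subtypeL).codRestrict W₀
    (fun x => Submodule.mem_map_of_mem x.2)
  have hker : LinearMap.ker (f₀ : S →ₗ[ℂ] W₀) = ⊥ :=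
    LinearMap.ker_eq_bot_of_injective (f := (f₀ : S →ₗ[ℂ] W₀))
      (fun x y hxy => Subtype.ext (hAinj (congrArg Subtype.val hxy)))
  have hrange : LinearMap.range (f₀ : S →ₗ[ℂ] W₀) = ⊤ := by
    rw [LinearMap.range_eq_top]
    rintro ⟨y, x, hx, rfl⟩
    exact ⟨⟨x, hx⟩, rfl⟩
  let A_S : S ≃L[ℂ] W₀ := ContinuousLinearEquiv.ofBijective f₀ hker hrange
  have hA_S : ∀ x : S, (A_S x : K) = A x := fun x => rfl
  -- orthogonal complements
  haveI : CompleteSpace Sᗮ := S.isClosed_orthogonal.completeSpace_coe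
  haveI : CompleteSpace W₀ᗮ := W₀.isClosed_orthogonal.completeSpace_coe
  have hWperp : ¬ FiniteDimensional ℂ ↥W₀ᗮ := by
    intro hfin
    apply hperp
    let φ : ↥Sᗮ →ₗ[ℂ] ↥W₀ᗮ :=
      ((W₀ᗮ.orthogonalProjectionOnto).toLinearMap).comp ((A : H →ₗ[ℂ] K).comp Sᗮ.subtype)
    have hφ0 : ∀ v : ↥Sᗮ, φ v = 0 → v = 0 := by
      intro v hv
      have h1 : A ↑v ∈ W₀ᗮᗮ := Submodule.orthogonalProjectionOnto_eq_zero_iff.mp hv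
      rw [Submodule.orthogonal_orthogonal] at h1
      obtain ⟨s, hs, hsv⟩ := h1
      have hsv' : s = ↑v := hAinj hsv
      have hvS : (↑v : H) ∈ S := hsv' ▸ hs
      have h0 : (inner ℂ (↑v : H) ↑v : ℂ) = 0 :=
        (Submodule.mem_orthogonal S ↑v).mp v.2 ↑v hvS
      exact Subtype.ext (inner_self_eq_zero.mp h0)
    exact FiniteDimensional.of_injective φ ((injective_iff_map_eq_zero φ).mpr hφ0)
  have hHfd : ¬ FiniteDimensional ℂ H := fun hfin => hperp inferInstance
  -- Hilbert bases
  obtain ⟨c⟩ := exists_hilbertBasis_nat H hHfd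
  obtain ⟨c₁⟩ := exists_hilbertBasis_nat ↥Sᗮ hperp
  obtain ⟨c₂⟩ := exists_hilbertBasis_nat ↥W₀ᗮ hWperp
  let V : ↥Sᗮ ≃ₗᵢ[ℂ] ↥W₀ᗮ := c₁.repr.trans c₂.repr.symm
  -- the global isomorphism U
  let eH := S.prodEquivOfClosedCompl Sᗮ Submodule.isCompl_orthogonal_of_hasOrthogonalProjection
    hSclosed S.isClosed_orthogonal
  let eK := W₀.prodEquivOfClosedCompl W₀ᗮ Submodule.isCompl_orthogonal_of_hasOrthogonalProjection
    hW₀closed W₀.isClosed_orthogonal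
  let U : H ≃L[ℂ] K := (eH.symm.trans (A_S.prodCongr V.toContinuousLinearEquiv)).trans eK
  have hU : ∀ x, x ∈ S → U x = A x := by
    intro x hx
    have h1 : eH.symm x = ((⟨x, hx⟩ : ↥S), (0 : ↥Sᗮ)) := by
      apply eH.injective
      rw [eH.apply_symm_apply]
      show x = ((⟨x, hx⟩ : ↥S) : H) + ((0 : ↥Sᗮ) : H)
      simp
    have h2 : U x = eK ((A_S.prodCongr V.toContinuousLinearEquiv) (eH.symm x)) := rfl
    rw [h2, h1]
    have h3 : (A_S.prodCongr V.toContinuousLinearEquiv) ((⟨x, hx⟩ : ↥S), (0 : ↥Sᗮ))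
        = (A_S ⟨x, hx⟩, (0 : ↥W₀ᗮ)) := by
      have : V.toContinuousLinearEquiv (0 : ↥Sᗮ) = 0 := map_zero _
      simp [ContinuousLinearEquiv.prodCongr_apply, this]
    rw [h3]
    show (↑(A_S ⟨x, hx⟩) : K) + ((0 : ↥W₀ᗮ) : K) = A x
    rw [hA_S]
    simp
  -- the Riesz basis of H
  let Uadj : K ≃L[ℂ] H := cleAdjoint U
  let Φ : H ≃ₗᵢ[ℂ] K := c.repr.trans b.repr.symm
  let T₂ : H ≃L[ℂ] H := Φ.toContinuousLinearEquiv.trans Uadj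
  refine ⟨fun n => Uadj (b n), ⟨c, T₂, ?_⟩, R, hR, ?_⟩
  · intro n
    show Uadj (b n) = Uadj (Φ (c n))
    congr 1
    show b n = b.repr.symm (c.repr (c n))
    rw [c.repr_self]
    apply b.repr.injective
    rw [b.repr_self, LinearIsometryEquiv.apply_symm_apply]
  · intro x hx
    have hxS : x ∈ S := by
      rw [hS]
      exact Submodule.le_topologicalClosure _ (Submodule.subset_span hx)
    have hcoef : ∀ n, (inner ℂ x (Uadj (b n)) : ℂ) = inner ℂ (J x) (e n) := by
      intro n
      have h1 : (inner ℂ x (Uadj (b n)) : ℂ) = inner ℂ (U x) (b n) := by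
        rw [cleAdjoint_apply, ContinuousLinearMap.adjoint_inner_right]
        simp
      rw [h1, hU x hxS, hAinner]
    have hEq : l1Norm (fun n => Uadj (b n)) x = l1Norm e (J x) := by
      unfold l1Norm
      exact tsum_congr fun n => by rw [hcoef]
    rw [hEq]
    exact hRb (J x) ⟨x, hx, rfl⟩
end
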